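/- arXiv:0909.3034 — 5 statements merged into one kernel-verified Lean document; each statement's English description precedes it below -/
import Mathlib

section
/- The proximity region N_PE^r(x, M) in a triangle T is similar to T with similarity ratio min(d(v(x), e(x)), r·d(v(x), ℓ(v(x),x))) / d(v(x), e(x)). -/
open Set

/-- The closed triangle with vertices given by the affine basis `b` of the plane. -/
noncomputable def Tri (b : AffineBasis (Fin 3) ℝ (EuclideanSpace ℝ (Fin 2))) :
    Set (EuclideanSpace ℝ (Fin 2)) :=
  convexHull ℝ (Set.range ⇑b)

/-- The proportional-edge proximity region `N_PE^r(x)` for a point `x` whose vertex region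
corresponds to the vertex `b i`: the image of the triangle under the homothety centered at
`b i` with ratio `r·(1 - b.coord i x)` (the triangle similar to `T` with vertex `b i` and
opposite edge at distance `r·d(b i, ℓ(b i,x))` from `b i`), intersected with the triangle. -/
noncomputable def NPE (b : AffineBasis (Fin 3) ℝ (EuclideanSpace ℝ (Fin 2)))
    (r : ℝ) (i : Fin 3) (x : EuclideanSpace ℝ (Fin 2)) :
    Set (EuclideanSpace ℝ (Fin 2)) :=
  (AffineMap.homothety (b i) (r * (1 - b.coord i x)) '' Tri b) ∩ Tri b

/-! With `t` the barycentric coordinate of `x` at `v(x)`, the parallel line `ℓ(v(x), x)` is the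
image of the opposite edge line under the homothety at `v(x)` of ratio `1 - t`, so
`d(v(x), ℓ(v(x), x)) = (1 - t) · d(v(x), e(x))` and the claimed ratio is `min 1 (r (1 - t))`.
Since `T` is convex and contains `v(x)`, a homothety at `v(x)` of ratio `k ≥ 0` maps `T` into
`T` when `k ≤ 1` and onto a superset of `T` when `k ≥ 1`; intersecting with `T` leaves the
homothety of ratio `min 1 k`. -/

section Convex

variable {E : Type*} [AddCommGroup E] [Module ℝ E] {s : Set E} {c : E} {k : ℝ}

theorem Convex.image_homothety_subset (hs : Convex ℝ s) (hc : c ∈ s) (hk₀ : 0 ≤ k)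
    (hk₁ : k ≤ 1) :
    AffineMap.homothety c k '' s ⊆ s := by
  rintro _ ⟨y, hy, rfl⟩
  rw [AffineMap.homothety_eq_lineMap]
  exact hs.lineMap_mem hc hy ⟨hk₀, hk₁⟩

theorem Convex.subset_image_homothety (hs : Convex ℝ s) (hc : c ∈ s) (hk : 1 ≤ k) :
    s ⊆ AffineMap.homothety c k '' s := by
  intro y hy
  refine ⟨AffineMap.homothety c k⁻¹ y, hs.image_homothety_subset hc (by positivity)
    (inv_le_one_of_one_le₀ hk) (mem_image_of_mem _ hy), ?_⟩
  rw [← AffineMap.homothety_mul_apply, mul_inv_cancel₀ (by positivity), AffineMap.homothety_one,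
    AffineMap.id_apply]

theorem Convex.image_homothety_inter_self (hs : Convex ℝ s) (hc : c ∈ s) (hk : 0 ≤ k) :
    AffineMap.homothety c k '' s ∩ s = AffineMap.homothety c (min 1 k) '' s := by
  rcases le_total k 1 with hk₁ | hk₁
  · rw [min_eq_right hk₁, inter_eq_left.mpr (hs.image_homothety_subset hc hk hk₁)]
  · rw [min_eq_left hk₁, inter_eq_right.mpr (hs.subset_image_homothety hc hk₁),
      AffineMap.homothety_one, AffineMap.coe_id, image_id]

end Convex

section NormedAddTorsor

variable {V P : Type*} [NormedAddCommGroup V] [NormedSpace ℝ V] [MetricSpace P]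
  [NormedAddTorsor V P]

theorem infDist_center_image_homothety (c : P) (k : ℝ) (s : Set P) :
    Metric.infDist c (AffineMap.homothety c k '' s) = |k| * Metric.infDist c s := by
  simp only [Metric.infDist_eq_iInf, ← sInf_image', image_image]
  rw [sInf_image', sInf_image', Real.mul_iInf_of_nonneg (abs_nonneg k)]
  simp only [dist_center_homothety, Real.norm_eq_abs]

namespace AffineBasis

variable {ι : Type*} (b : AffineBasis ι ℝ P) (i : ι)

theorem coord_le_one_of_forall_nonneg [Fintype ι] {q : P} (hq : ∀ j, 0 ≤ b.coord j q) :
    b.coord i q ≤ 1 :=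
  b.sum_coord_apply_eq_one q ▸ Finset.single_le_sum (fun j _ => hq j) (Finset.mem_univ i)

theorem coord_homothety (k : ℝ) (q : P) :
    b.coord i (AffineMap.homothety (b i) k q) = 1 + k * (b.coord i q - 1) := by
  rw [AffineMap.homothety_eq_lineMap, AffineMap.apply_lineMap, b.coord_apply_eq,
    AffineMap.lineMap_apply_ring']
  ring

theorem coord_level_set_eq_image_homothety {s : ℝ} (hs : s ≠ 1) :
    {q | b.coord i q = s} = AffineMap.homothety (b i) (1 - s) '' {q | b.coord i q = 0} := by
  have hs' : 1 - s ≠ 0 := sub_ne_zero.mpr hs.symm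
  ext q
  refine ⟨fun (hq : b.coord i q = s) => ⟨AffineMap.homothety (b i) (1 - s)⁻¹ q, ?_, ?_⟩, ?_⟩
  · rw [mem_ofPred_eq, coord_homothety, hq]
    field_simp
    ring
  · rw [← AffineMap.homothety_mul_apply, mul_inv_cancel₀ hs', AffineMap.homothety_one,
      AffineMap.id_apply]
  · rintro ⟨w, hw : b.coord i w = 0, rfl⟩
    rw [mem_ofPred_eq, coord_homothety, hw]
    ring

theorem infDist_coord_level_set (s : ℝ) :
    Metric.infDist (b i) {q | b.coord i q = s} =
      |1 - s| * Metric.infDist (b i) {q | b.coord i q = 0} := by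
  rcases eq_or_ne s 1 with rfl | hs
  · rw [sub_self, abs_zero, zero_mul]
    exact Metric.infDist_zero_of_mem (b.coord_apply_eq i)
  · rw [b.coord_level_set_eq_image_homothety i hs, infDist_center_image_homothety]

theorem infDist_coord_eq_zero_pos [FiniteDimensional ℝ V] [Nontrivial ι] :
    0 < Metric.infDist (b i) {q | b.coord i q = 0} := by
  obtain ⟨j, hj⟩ := exists_ne i
  have hclosed : IsClosed {q | b.coord i q = 0} :=
    isClosed_eq (b.coord i).continuous_of_finiteDimensional continuous_const
  rw [← hclosed.notMem_iff_infDist_pos ⟨b j, b.coord_apply_ne hj.symm⟩]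
  simp [b.coord_apply_eq]

end AffineBasis

end NormedAddTorsor

theorem NPE_similarity_ratio_general (b : AffineBasis (Fin 3) ℝ (EuclideanSpace ℝ (Fin 2)))
    (v : EuclideanSpace ℝ (Fin 2) → Fin 3)
    (r : ℝ) (hr : 1 ≤ r)
    (x : EuclideanSpace ℝ (Fin 2)) (hx : x ∈ Tri b)
    (de dl : ℝ)
    (hde : de = Metric.infDist (b (v x)) {z | b.coord (v x) z = 0})
    (hdl : dl = Metric.infDist (b (v x)) {z | b.coord (v x) z = b.coord (v x) x}) :
    NPE b r (v x) x =
      AffineMap.homothety (b (v x)) (min de (r * dl) / de) '' Tri b := by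
  set i := v x
  have hcoord : ∀ j, 0 ≤ b.coord j x := by rwa [Tri, b.convexHull_eq_nonneg_coord] at hx
  have ht : 0 ≤ 1 - b.coord i x := sub_nonneg.mpr (b.coord_le_one_of_forall_nonneg i hcoord)
  have hde_pos : 0 < de := hde ▸ b.infDist_coord_eq_zero_pos i
  have hdl_eq : dl = (1 - b.coord i x) * de := by
    rw [hdl, hde, b.infDist_coord_level_set, abs_of_nonneg ht]
  have hratio : min de (r * dl) / de = min 1 (r * (1 - b.coord i x)) := by
    rw [hdl_eq, ← mul_assoc]
    nth_rewrite 1 [← one_mul de]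
    rw [← min_mul_of_nonneg _ _ hde_pos.le, mul_div_cancel_right₀ _ hde_pos.ne']
  rw [hratio, NPE, Tri, (convex_convexHull ℝ _).image_homothety_inter_self
    (subset_convexHull ℝ _ (mem_range_self i)) (by positivity)]

/-- The proximity region `N_PE^r(x, M)` is similar to the triangle `T` with similarity
ratio `min(d(v(x), e(x)), r·d(v(x), ℓ(v(x),x))) / d(v(x), e(x))`: it is the image of `T`
under the homothety centered at the vertex `v(x)` with that ratio.  Here
`d(v(x), e(x)) = infDist (b (v x)) {z | coord z = 0}` is the distance from the vertex to
the line of the opposite edge, and `d(v(x), ℓ(v(x),x)) = infDist (b (v x))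
{z | coord z = coord x}` is the distance from the vertex to the line through `x` parallel
to that edge. -/
theorem NPE_similarity_ratio (b : AffineBasis (Fin 3) ℝ (EuclideanSpace ℝ (Fin 2)))
    (v : EuclideanSpace ℝ (Fin 2) → Fin 3)
    (r : ℝ) (hr : 1 ≤ r)
    (x : EuclideanSpace ℝ (Fin 2)) (hx : x ∈ Tri b) (hxv : ∀ i, x ≠ b i)
    (de dl : ℝ)
    (hde : de = Metric.infDist (b (v x)) {z | b.coord (v x) z = 0})
    (hdl : dl = Metric.infDist (b (v x)) {z | b.coord (v x) z = b.coord (v x) x}) :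
    NPE b r (v x) x =
      AffineMap.homothety (b (v x)) (min de (r * dl) / de) '' Tri b :=
  NPE_similarity_ratio_general b v r hr x hx de dl hde hdl
end

section
/- Let X₁,…,Xₙ be points in a triangle T = T(y₁,y₂,y₃), with vertex regions R_M(y₁), R_M(y₂), R_M(y₃) determined by an interior point M. For each i with Xₙ ∩ R_M(yᵢ) nonempty, let X_{[i,1]} be a point of Xₙ ∩ R_M(yᵢ) minimizing distance to the edge eᵢ opposite yᵢ. Then Xₙ ∩ R_M(yᵢ) ⊆ N_PE^r(X_{[i,1]}, M) for each i, and consequently the domination number of the proportional-edge PCD on Xₙ is at most 3. -/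
open Set

/-- The domination number of the digraph on `Fin n` with adjacency relation `adj`:
the minimum cardinality of a set `S` such that every vertex `j` either belongs to `S`
or is the head of an arc from some `s ∈ S`. -/
noncomputable def domNum (n : ℕ) (adj : Fin n → Fin n → Prop) : ℕ :=
  sInf {k : ℕ | ∃ S : Finset (Fin n), S.card = k ∧ ∀ j, ∃ s ∈ S, s = j ∨ adj s j}

/-!
The distance from a point to the line of the edge `eᵢ` is a fixed positive multiple of its
`i`-th barycentric coordinate, so the selected point `X_[i,1]` has the smallest `i`-th coordinate
among the sample points of its vertex region. For `r ≥ 1`, `N_PE^r(x)` contains every point of the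
triangle whose `i`-th coordinate is at least that of `x`, hence the whole region; the (at most
three) selected points therefore dominate the digraph.
-/

open Metric

section HyperplaneDistance

variable {E : Type*} [NormedAddCommGroup E] [InnerProductSpace ℝ E] [FiniteDimensional ℝ E]

theorem AffineMap.infDist_zero_set_eq (f : E →ᵃ[ℝ] ℝ) (hf : f.linear ≠ 0) (z : E) :
    infDist z {w | f w = 0} = |f z| / ‖LinearMap.toContinuousLinearMap f.linear‖ := by
  set φ := LinearMap.toContinuousLinearMap f.linear
  -- the Riesz vector of `φ` is the normal direction of the hyperplane
  set u := (InnerProductSpace.toDual ℝ E).symm φ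
  have hφu : φ u = ‖φ‖ ^ 2 := by
    rw [← InnerProductSpace.toDual_symm_apply, real_inner_self_eq_norm_sq,
      LinearIsometryEquiv.norm_map]
  have hφ : 0 < ‖φ‖ := norm_pos_iff.mpr fun h => hf (by simpa [φ] using h)
  have hf_sub (w : E) : f z - f w = φ (z - w) := (f.linearMap_vsub z w).symm
  set w₀ := z - (f z / ‖φ‖ ^ 2) • u
  have hw₀ : f w₀ = 0 := by
    have := hf_sub w₀
    simp only [w₀, sub_sub_cancel, map_smul, hφu, smul_eq_mul] at this
    field_simp at this
    linarith
  refine le_antisymm ?_ ((le_infDist ⟨w₀, hw₀⟩).mpr fun w (hw : f w = 0) => ?_)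
  · calc infDist z {w | f w = 0} ≤ dist z w₀ := infDist_le_dist_of_mem hw₀
      _ = |f z| / ‖φ‖ := by
        rw [dist_eq_norm, sub_sub_cancel, norm_smul, LinearIsometryEquiv.norm_map, Real.norm_eq_abs,
          abs_div, abs_of_pos (by positivity : 0 < ‖φ‖ ^ 2)]
        field_simp
  · rw [div_le_iff₀' hφ, dist_eq_norm, ← sub_zero (f z), ← hw, hf_sub]
    exact φ.le_opNorm (z - w)

end HyperplaneDistance

section Barycentric

variable {ι E : Type*} [AddCommGroup E] [Module ℝ E] (b : AffineBasis ι ℝ E) {y : E}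

theorem AffineBasis.coord_nonneg_of_mem_convexHull (hy : y ∈ convexHull ℝ (range b)) (i : ι) :
    0 ≤ b.coord i y := by
  rw [b.convexHull_eq_nonneg_coord] at hy
  exact hy i

theorem AffineBasis.coord_homothety_s4 (c : E) (k : ℝ) (p : E) (j : ι) :
    b.coord j (AffineMap.homothety c k p) = b.coord j c + k * (b.coord j p - b.coord j c) := by
  rw [AffineMap.homothety_eq_lineMap, AffineMap.apply_lineMap, AffineMap.lineMap_apply_ring']
  ring

theorem AffineBasis.coord_linear_ne_zero [Nontrivial ι] (i : ι) : (b.coord i).linear ≠ 0 := by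
  intro h
  obtain ⟨q, hq⟩ := (b.coord i).linear_eq_zero_iff_exists_const.mp h
  obtain ⟨p, hp⟩ := b.surjective_coord i (q + 1)
  simp [hq] at hp

variable [Fintype ι]

theorem AffineBasis.coord_le_one_of_mem_convexHull (hy : y ∈ convexHull ℝ (range b)) (i : ι) :
    b.coord i y ≤ 1 :=
  b.sum_coord_apply_eq_one y ▸
    Finset.single_le_sum (fun j _ => b.coord_nonneg_of_mem_convexHull hy j) (Finset.mem_univ i)

theorem AffineBasis.eq_of_mem_convexHull_of_coord_eq_one (hy : y ∈ convexHull ℝ (range b))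
    {i : ι} (hi : b.coord i y = 1) : y = b i := by
  classical
  refine b.ext_elem fun j => ?_
  obtain rfl | hji := eq_or_ne j i
  · simp [hi]
  have hrest : ∑ l ∈ Finset.univ.erase i, b.coord l y = 0 := by
    linarith [Finset.add_sum_erase _ (fun l => b.coord l y) (Finset.mem_univ i),
      b.sum_coord_apply_eq_one y]
  rw [Finset.sum_eq_zero_iff_of_nonneg fun l _ => b.coord_nonneg_of_mem_convexHull hy l] at hrest
  rw [hrest j (Finset.mem_erase.mpr ⟨hji, Finset.mem_univ j⟩), b.coord_apply_ne hji]

theorem AffineBasis.mem_homothety_image_convexHull (hy : y ∈ convexHull ℝ (range b)) {i : ι}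
    {k : ℝ} (hk : 1 - b.coord i y ≤ k) :
    y ∈ AffineMap.homothety (b i) k '' convexHull ℝ (range b) := by
  have hy_le := b.coord_le_one_of_mem_convexHull hy i
  obtain hk0 | hkpos := (show 0 ≤ k by linarith).eq_or_lt
  · subst hk0
    refine ⟨b i, subset_convexHull ℝ _ (mem_range_self i), ?_⟩
    rw [AffineMap.homothety_zero, AffineMap.const_apply,
      b.eq_of_mem_convexHull_of_coord_eq_one hy (by linarith)]
  refine ⟨AffineMap.homothety (b i) k⁻¹ y, ?_, ?_⟩
  · rw [b.convexHull_eq_nonneg_coord]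
    intro j
    rw [b.coord_homothety_s4]
    obtain rfl | hji := eq_or_ne j i
    · rw [b.coord_apply_eq]
      have : k⁻¹ * (1 - b.coord j y) ≤ 1 := by rwa [inv_mul_le_iff₀ hkpos, mul_one]
      linarith
    · rw [b.coord_apply_ne hji]
      have := b.coord_nonneg_of_mem_convexHull hy j
      positivity
  · rw [← AffineMap.homothety_mul_apply, mul_inv_cancel₀ hkpos.ne', AffineMap.homothety_one,
      AffineMap.id_apply]

end Barycentric

section DistanceToEdge

variable {ι E : Type*} [Nontrivial ι] [NormedAddCommGroup E] [InnerProductSpace ℝ E]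
  [FiniteDimensional ℝ E] (b : AffineBasis ι ℝ E)

theorem AffineBasis.coord_le_coord_of_infDist_le {x y : E} (hx : x ∈ convexHull ℝ (range b))
    (hy : y ∈ convexHull ℝ (range b)) {i : ι}
    (h : infDist x {z | b.coord i z = 0} ≤ infDist y {z | b.coord i z = 0}) :
    b.coord i x ≤ b.coord i y := by
  have hlin := b.coord_linear_ne_zero i
  have hnorm : 0 < ‖LinearMap.toContinuousLinearMap (b.coord i).linear‖ :=
    norm_pos_iff.mpr fun h0 => hlin (by simpa using h0)
  rwa [(b.coord i).infDist_zero_set_eq hlin, (b.coord i).infDist_zero_set_eq hlin,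
    div_le_div_iff_of_pos_right hnorm, abs_of_nonneg (b.coord_nonneg_of_mem_convexHull hx i),
    abs_of_nonneg (b.coord_nonneg_of_mem_convexHull hy i)] at h

end DistanceToEdge

theorem mem_NPE_of_coord_le {b : AffineBasis (Fin 3) ℝ (EuclideanSpace ℝ (Fin 2))} {r : ℝ}
    (hr : 1 ≤ r) {i : Fin 3} {x y : EuclideanSpace ℝ (Fin 2)} (hx : x ∈ Tri b) (hy : y ∈ Tri b)
    (hxy : b.coord i x ≤ b.coord i y) : y ∈ NPE b r i x := by
  refine ⟨b.mem_homothety_image_convexHull hy ?_, hy⟩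
  have := b.coord_le_one_of_mem_convexHull hx i
  nlinarith

theorem domNum_le_card {n : ℕ} {adj : Fin n → Fin n → Prop} (S : Finset (Fin n))
    (hS : ∀ j, ∃ s ∈ S, s = j ∨ adj s j) : domNum n adj ≤ S.card :=
  Nat.sInf_le ⟨S, rfl, hS⟩

/-- Let `X₁,…,Xₙ` be points in the triangle `T`, with vertex regions encoded by the
assignment `v` (so `R_M(y_i) = v ⁻¹' {i}`).  For each `i` whose vertex region contains a
sample point, let `sel i` select a sample point in that region at minimal distance to the
line of the edge `e_i` opposite `b i` (the zero set of the `i`-th barycentric coordinate).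
Then all sample points of region `i` belong to `N_PE^r(X_{[i,1]}, M)`, and consequently
the domination number of the proportional-edge PCD is at most 3. -/
theorem closest_to_edge_dominates_region_and_domNum_le_three
    (b : AffineBasis (Fin 3) ℝ (EuclideanSpace ℝ (Fin 2)))
    (v : EuclideanSpace ℝ (Fin 2) → Fin 3)
    (r : ℝ) (hr : 1 ≤ r)
    (n : ℕ) (X : Fin n → EuclideanSpace ℝ (Fin 2)) (hX : ∀ j, X j ∈ Tri b)
    (sel : Fin 3 → Fin n)
    (hsel : ∀ i, (∃ j, v (X j) = i) →
      v (X (sel i)) = i ∧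
      ∀ j, v (X j) = i →
        Metric.infDist (X (sel i)) {z | b.coord i z = 0} ≤
          Metric.infDist (X j) {z | b.coord i z = 0}) :
    (∀ i, (∃ j, v (X j) = i) → ∀ j, v (X j) = i → X j ∈ NPE b r i (X (sel i))) ∧
    domNum n (fun s j => X j ∈ NPE b r (v (X s)) (X s)) ≤ 3 := by
  have dominates : ∀ i, (∃ j, v (X j) = i) → ∀ j, v (X j) = i → X j ∈ NPE b r i (X (sel i)) :=
    fun i hi j hj => mem_NPE_of_coord_le hr (hX _) (hX j)
      (b.coord_le_coord_of_infDist_le (hX _) (hX j) ((hsel i hi).2 j hj))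
  refine ⟨dominates, (domNum_le_card (Finset.univ.image sel) fun j => ?_).trans ?_⟩
  · refine ⟨sel (v (X j)), Finset.mem_image_of_mem sel (Finset.mem_univ _), Or.inr ?_⟩
    rw [(hsel _ ⟨j, rfl⟩).1]
    exact dominates _ ⟨j, rfl⟩ j rfl
  · exact Finset.card_image_le.trans (by simp)
end

section
/- For the basic triangle T_b = T((0,0),(1,0),(c₁,c₂)) with 0 < c₁ ≤ 1/2, c₂ > 0, and for 1 ≤ r < 3/2, the set 𝒯_r = {(x,y) ∈ T_b : y ≥ c₂(r−1)/r, y ≤ c₂(1−rx)/(r(1−c₁)), y ≤ c₂(r(x−1)+1)/(r c₁)} is the triangle with vertices ((r−1)(1+c₁)/r, c₂(r−1)/r), ((2−r+c₁(r−1))/r, c₂(r−1)/r), and ((c₁(2−r)+r−1)/r, c₂(2−r)/r). -/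
/-!
`𝒯_r` is the image of `T_b` under the homothety centred at the centroid of `T_b` with ratio
`k = (3 - 2r)/r ∈ (0, 1]`. In barycentric coordinates `λᵢ` of `T_b` this homothety acts as
`λᵢ ↦ (1 - k)/3 + k λᵢ`, so its image is cut out by `λᵢ ≥ (1 - k)/3 = (r - 1)/r`, and these are
exactly the three defining inequalities of `𝒯_r` (which already force `λᵢ ≥ 0`, i.e. `p ∈ T_b`).
-/

open Set AffineMap

theorem le_iff_le_of_sub_eq_mul {α : Type*} [Ring α] [LinearOrder α] [IsStrictOrderedRing α]
    {a b c d k : α} (hk : 0 < k) (h : d - c = k * (b - a)) :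
    a ≤ b ↔ c ≤ d := by
  rw [← sub_nonneg, ← sub_nonneg (a := d), h, mul_nonneg_iff_of_pos_left hk]

namespace AffineBasis

variable {ι 𝕜 E : Type*} [Fintype ι] [Field 𝕜] [AddCommGroup E] [Module 𝕜 E]

theorem coord_eq_of_sum_smul_eq (b : AffineBasis ι 𝕜 E) {w : ι → 𝕜} (hw : ∑ i, w i = 1)
    {x : E} (hx : ∑ i, w i • b i = x) (i : ι) : b.coord i x = w i := by
  rw [← hx, ← Finset.univ.affineCombination_eq_linear_combination _ _ hw]
  exact b.coord_apply_combination_of_mem (Finset.mem_univ i) hw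

theorem coord_homothety_centroid [CharZero 𝕜] (b : AffineBasis ι 𝕜 E) (k : 𝕜) (x : E) (i : ι) :
    b.coord i (homothety (Finset.univ.centroid 𝕜 b) k x) =
      (1 - k) / Fintype.card ι + k * b.coord i x := by
  rw [homothety_eq_lineMap, apply_lineMap, lineMap_apply_ring,
    b.coord_apply_centroid (Finset.mem_univ i), Finset.card_univ]
  ring

theorem convexHull_image_homothety_centroid [LinearOrder 𝕜] [IsStrictOrderedRing 𝕜]
    (b : AffineBasis ι 𝕜 E) {k : 𝕜} (hk : 0 < k) :
    convexHull 𝕜 (homothety (Finset.univ.centroid 𝕜 b) k '' range b) =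
      {x | ∀ i, (1 - k) / Fintype.card ι ≤ b.coord i x} := by
  set c := Finset.univ.centroid 𝕜 b
  rw [← AffineMap.image_convexHull, b.convexHull_eq_nonneg_coord]
  ext x
  simp only [mem_image, mem_ofPred_eq]
  constructor
  · rintro ⟨y, hy, rfl⟩ i
    rw [coord_homothety_centroid, le_add_iff_nonneg_right]
    exact mul_nonneg hk.le (hy i)
  · intro hx
    have hxy : homothety c k (homothety c k⁻¹ x) = x := by
      rw [← homothety_mul_apply, mul_inv_cancel₀ hk.ne', homothety_one, id_apply]
    refine ⟨_, fun i => ?_, hxy⟩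
    have hi := hx i
    rw [← hxy, coord_homothety_centroid, le_add_iff_nonneg_right] at hi
    exact nonneg_of_mul_nonneg_right hi hk

end AffineBasis

theorem affineIndependent_basicTriangle (c₁ : ℝ) {c₂ : ℝ} (hc₂ : c₂ ≠ 0) :
    AffineIndependent ℝ ![((0 : ℝ), (0 : ℝ)), (1, 0), (c₁, c₂)] := by
  rw [affineIndependent_iff_not_collinear_set, collinear_iff_of_mem (mem_insert _ _)]
  rintro ⟨v, hv⟩
  obtain ⟨a, ha⟩ := hv (1, 0) (by simp)
  obtain ⟨b, hb⟩ := hv (c₁, c₂) (by simp)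
  simp only [vadd_eq_add, Prod.ext_iff, Prod.fst_add, Prod.snd_add, add_zero, Prod.smul_fst,
    Prod.smul_snd, smul_eq_mul] at ha hb
  obtain ⟨ha₁, ha₂⟩ := ha
  rcases mul_eq_zero.mp ha₂.symm with rfl | hv₂
  · simp at ha₁
  · exact hc₂ (by rw [hb.2, hv₂, mul_zero])

def basicTriangle (c₁ : ℝ) {c₂ : ℝ} (hc₂ : c₂ ≠ 0) : AffineBasis (Fin 3) ℝ (ℝ × ℝ) :=
  ⟨_, affineIndependent_basicTriangle c₁ hc₂, by
    rw [(affineIndependent_basicTriangle c₁ hc₂).affineSpan_eq_top_iff_card_eq_finrank_add_one]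
    simp⟩

section basicTriangle

variable (c₁ : ℝ) {c₂ : ℝ} (hc₂ : c₂ ≠ 0)

theorem coe_basicTriangle :
    ⇑(basicTriangle c₁ hc₂) = ![((0 : ℝ), (0 : ℝ)), (1, 0), (c₁, c₂)] := rfl

theorem range_basicTriangle :
    range (basicTriangle c₁ hc₂) = {((0 : ℝ), (0 : ℝ)), (1, 0), (c₁, c₂)} := by
  rw [coe_basicTriangle, Matrix.range_cons, Matrix.range_cons, Matrix.range_cons_empty,
    singleton_union, singleton_union]

theorem coord_basicTriangle (p : ℝ × ℝ) (i : Fin 3) :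
    (basicTriangle c₁ hc₂).coord i p =
      ![1 - p.1 - (1 - c₁) * p.2 / c₂, p.1 - c₁ * p.2 / c₂, p.2 / c₂] i := by
  refine AffineBasis.coord_eq_of_sum_smul_eq _ ?_ ?_ i
  · simp only [Fin.sum_univ_three, Matrix.cons_val_zero, Matrix.cons_val_one,
      Matrix.cons_val_two, Matrix.head_cons, Matrix.tail_cons]
    ring
  · simp only [coe_basicTriangle, Fin.sum_univ_three, Matrix.cons_val_zero, Matrix.cons_val_one,
      Matrix.cons_val, Prod.smul_mk, smul_eq_mul, mul_zero, mul_one, Prod.mk_add_mk, zero_add,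
      add_zero, Prod.ext_iff]
    exact ⟨by ring, div_mul_cancel₀ _ hc₂⟩

theorem centroid_basicTriangle :
    Finset.univ.centroid ℝ (basicTriangle c₁ hc₂) = ((1 + c₁) / 3, c₂ / 3) := by
  rw [Finset.centroid_def, Finset.affineCombination_eq_linear_combination _ _ _
    (Finset.univ.sum_centroidWeights_eq_one_of_nonempty ℝ Finset.univ_nonempty)]
  simp only [Finset.centroidWeights_apply, Finset.card_univ, Fintype.card_fin, Nat.cast_ofNat,
    coe_basicTriangle, Fin.sum_univ_three, Matrix.cons_val_zero, Matrix.cons_val_one,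
    Matrix.cons_val, Prod.smul_mk, smul_eq_mul, mul_zero, mul_one, Prod.mk_add_mk, zero_add,
    add_zero, Prod.ext_iff]
  constructor <;> ring

theorem image_homothety_centroid_basicTriangle {r : ℝ} (hr : r ≠ 0) :
    homothety (Finset.univ.centroid ℝ (basicTriangle c₁ hc₂)) ((3 - 2 * r) / r) ''
        range (basicTriangle c₁ hc₂) =
      {((r - 1) * (1 + c₁) / r, c₂ * (r - 1) / r),
        ((2 - r + c₁ * (r - 1)) / r, c₂ * (r - 1) / r),
        ((c₁ * (2 - r) + r - 1) / r, c₂ * (2 - r) / r)} := by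
  rw [range_basicTriangle, image_insert_eq, image_insert_eq, image_singleton,
    centroid_basicTriangle]
  simp only [homothety_apply, vsub_eq_sub, vadd_eq_add, Prod.mk_sub_mk, Prod.smul_mk,
    Prod.mk_add_mk, smul_eq_mul]
  refine congrArg₂ _ ?_ (congrArg₂ _ ?_ (congrArg _ ?_)) <;> ext <;> field_simp <;> ring

end basicTriangle

theorem le_coord_basicTriangle_iff {c₁ c₂ r : ℝ} (hc₁ : 0 < c₁) (hc₁' : c₁ < 1) (hc₂ : 0 < c₂)
    (hr : 0 < r) (p : ℝ × ℝ) :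
    (∀ i, (r - 1) / r ≤ (basicTriangle c₁ hc₂.ne').coord i p) ↔
      c₂ * (r - 1) / r ≤ p.2 ∧ p.2 ≤ c₂ * (1 - r * p.1) / (r * (1 - c₁)) ∧
        p.2 ≤ c₂ * (r * (p.1 - 1) + 1) / (r * c₁) := by
  have hc₁₁ : 1 - c₁ ≠ 0 := by linarith
  have h₀ : p.2 ≤ c₂ * (1 - r * p.1) / (r * (1 - c₁)) ↔
      (r - 1) / r ≤ 1 - p.1 - (1 - c₁) * p.2 / c₂ :=
    le_iff_le_of_sub_eq_mul (k := (1 - c₁) / c₂) (div_pos (by linarith) hc₂)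
      (by field_simp; ring)
  have h₁ : p.2 ≤ c₂ * (r * (p.1 - 1) + 1) / (r * c₁) ↔ (r - 1) / r ≤ p.1 - c₁ * p.2 / c₂ :=
    le_iff_le_of_sub_eq_mul (k := c₁ / c₂) (div_pos hc₁ hc₂) (by field_simp; ring)
  have h₂ : c₂ * (r - 1) / r ≤ p.2 ↔ (r - 1) / r ≤ p.2 / c₂ :=
    le_iff_le_of_sub_eq_mul (k := 1 / c₂) (div_pos one_pos hc₂) (by field_simp)
  simp only [Fin.forall_fin_succ, IsEmpty.forall_iff, and_true, coord_basicTriangle,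
    Fin.succ_zero_eq_one, Fin.succ_one_eq_two, Matrix.cons_val_zero, Matrix.cons_val_one,
    Matrix.cons_val_two, Matrix.head_cons, Matrix.tail_cons, h₀, h₁, h₂]
  exact and_rotate.symm

/-- For the basic triangle `T_b = T((0,0),(1,0),(c₁,c₂))` with `0 < c₁ ≤ 1/2`, `c₂ > 0`,
and for `1 ≤ r < 3/2`, the set
`𝒯_r = {(x,y) ∈ T_b : y ≥ c₂(r−1)/r, y ≤ c₂(1−rx)/(r(1−c₁)), y ≤ c₂(r(x−1)+1)/(r c₁)}`
is the triangle (convex hull) with vertices `((r−1)(1+c₁)/r, c₂(r−1)/r)`,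
`((2−r+c₁(r−1))/r, c₂(r−1)/r)` and `((c₁(2−r)+r−1)/r, c₂(2−r)/r)`. -/
theorem Tr_eq_triangle_in_basic_triangle
    (c₁ c₂ r : ℝ) (hc₁ : 0 < c₁) (hc₁' : c₁ ≤ 1 / 2) (hc₂ : 0 < c₂)
    (hr : 1 ≤ r) (hr' : r < 3 / 2)
    (Tb : Set (ℝ × ℝ))
    (hTb : Tb = convexHull ℝ {((0 : ℝ), (0 : ℝ)), (1, 0), (c₁, c₂)}) :
    {p : ℝ × ℝ | p ∈ Tb ∧ c₂ * (r - 1) / r ≤ p.2 ∧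
        p.2 ≤ c₂ * (1 - r * p.1) / (r * (1 - c₁)) ∧
        p.2 ≤ c₂ * (r * (p.1 - 1) + 1) / (r * c₁)} =
      convexHull ℝ {((r - 1) * (1 + c₁) / r, c₂ * (r - 1) / r),
        ((2 - r + c₁ * (r - 1)) / r, c₂ * (r - 1) / r),
        ((c₁ * (2 - r) + r - 1) / r, c₂ * (2 - r) / r)} := by
  have hr₀ : 0 < r := by linarith
  have ht₀ : 0 ≤ (r - 1) / r := div_nonneg (by linarith) hr₀.le
  have hratio : (1 - (3 - 2 * r) / r) / (Fintype.card (Fin 3) : ℝ) = (r - 1) / r := by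
    rw [Fintype.card_fin]
    field_simp
    ring
  set b := basicTriangle c₁ hc₂.ne'
  rw [← image_homothety_centroid_basicTriangle c₁ hc₂.ne' hr₀.ne',
    b.convexHull_image_homothety_centroid (div_pos (by linarith) hr₀), hratio, hTb,
    ← range_basicTriangle c₁ hc₂.ne', b.convexHull_eq_nonneg_coord]
  ext p
  simp only [mem_ofPred_eq]
  rw [← le_coord_basicTriangle_iff hc₁ (by linarith) hc₂ hr₀,
    and_iff_right_of_imp fun h i => ht₀.trans (h i)]
end

section
/- Let T be a triangle and for each edge e let ℓ_e(δ) denote the chord parallel to e. In the standard equilateral triangle, for r ≥ 2 the superset region ℛ_S(r, M) := {x ∈ T : T ⊆ N_PE^r(x, M)} contains the medial triangle T(M₁, M₂, M₃) (the triangle of edge midpoints), for every choice of interior center M. -/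
open Set

/-- A point of the Euclidean plane with the given coordinates. -/
noncomputable def pt (a c : ℝ) : EuclideanSpace ℝ (Fin 2) :=
  (WithLp.equiv 2 (Fin 2 → ℝ)).symm ![a, c]

/-- A convex set is contained in the image of itself under a homothety of ratio `k ≥ 1`
centered at one of its points. -/
lemma subset_homothety_image {E : Type*} [AddCommGroup E] [Module ℝ E]
    {s : Set E} (hs : Convex ℝ s) {c : E} (hc : c ∈ s) {k : ℝ} (hk : 1 ≤ k) :
    s ⊆ AffineMap.homothety c k '' s := by
  have hk0 : (0:ℝ) < k := lt_of_lt_of_le one_pos hk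
  have hki : k⁻¹ ≤ 1 := inv_le_one_of_one_le₀ hk
  intro y hy
  refine ⟨(1 - k⁻¹) • c + k⁻¹ • y, ?_, ?_⟩
  · exact hs hc hy (by linarith) (by positivity) (by ring)
  · have h : ((1 - k⁻¹) • c + k⁻¹ • y) - c = k⁻¹ • (y - c) := by module
    simp only [AffineMap.homothety_apply, vsub_eq_sub, vadd_eq_add, h, smul_smul,
      mul_inv_cancel₀ hk0.ne', one_smul, sub_add_cancel]

/-- In the standard equilateral triangle, for `r ≥ 2` the superset region
`ℛ_S(r, M) = {x ∈ T : T ⊆ N_PE^r(x, M)}` contains the medial triangle (the triangle of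
edge midpoints), for every choice of vertex-region assignment `v` (i.e. for every choice
of interior center `M`). -/
theorem medial_triangle_subset_superset_region
    (b : AffineBasis (Fin 3) ℝ (EuclideanSpace ℝ (Fin 2)))
    (hb0 : b 0 = pt 0 0) (hb1 : b 1 = pt 1 0)
    (hb2 : b 2 = pt (1 / 2) (Real.sqrt 3 / 2))
    (v : EuclideanSpace ℝ (Fin 2) → Fin 3)
    (r : ℝ) (hr : 2 ≤ r) :
    convexHull ℝ {midpoint ℝ (b 1) (b 2), midpoint ℝ (b 0) (b 2),
        midpoint ℝ (b 0) (b 1)} ⊆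
      {x | x ∈ Tri b ∧ Tri b ⊆ NPE b r (v x) x} := by
  have hTconv : Convex ℝ (Tri b) := convex_convexHull ℝ _
  have hmem : ∀ i : Fin 3, b i ∈ Tri b := fun i =>
    subset_convexHull ℝ _ ⟨i, rfl⟩
  have hmid : ∀ i j : Fin 3, midpoint ℝ (b i) (b j) ∈ Tri b := fun i j =>
    hTconv.segment_subset (hmem i) (hmem j) (midpoint_mem_segment _ _)
  intro x hx
  -- x is in the triangle
  have hxT : x ∈ Tri b := by
    refine convexHull_min ?_ hTconv hx
    intro y hy
    simp only [Set.mem_insert_iff, Set.mem_singleton_iff] at hy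
    rcases hy with rfl | rfl | rfl <;> exact hmid _ _
  -- each barycentric coordinate of x is ≤ 1/2
  have hcoord : ∀ i : Fin 3, b.coord i x ≤ 1 / 2 := by
    intro i
    have hconv : Convex ℝ {y : EuclideanSpace ℝ (Fin 2) | b.coord i y ≤ 1 / 2} :=
      (convex_Iic (1 / 2 : ℝ)).affine_preimage (b.coord i)
    refine convexHull_min ?_ hconv hx
    intro y hy
    simp only [Set.mem_insert_iff, Set.mem_singleton_iff] at hy
    rcases hy with rfl | rfl | rfl <;>
      · rw [Set.mem_setOf_eq, AffineMap.map_midpoint, midpoint_eq_smul_add, invOf_eq_inv]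
        fin_cases i <;> norm_num [AffineBasis.coord_apply, Fin.ext_iff]
  refine ⟨hxT, ?_⟩
  intro y hy
  have hk : (1 : ℝ) ≤ r * (1 - b.coord (v x) x) := by
    have := hcoord (v x)
    nlinarith
  exact ⟨subset_homothety_image hTconv (hmem (v x)) hk hy, hy⟩
end

section
/- Let X₁,…,Xₙ be a finite set of points in triangle T, and for each edge eᵢ let X_{eᵢ} be a point of the sample closest to eᵢ. Then the Γ₁-region of the whole sample equals the intersection of the Γ₁-regions of the three edge extrema: Γ₁^r(Xₙ, M) = ⋂_{i=1}^{3} Γ₁^r(X_{eᵢ}, M). -/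
/-!
The `i`-th barycentric coordinate is an affine functional vanishing exactly on the edge `eᵢ`,
so the distance of a point of the triangle to `eᵢ` is a fixed positive multiple of its
`i`-th coordinate. Hence the sample point closest to `eᵢ` has the smallest `i`-th coordinate,
and for `z` in the vertex region of `yᵢ` the defining inequality of `Γ₁` for that point implies
the one for every other sample point.
-/

open Set

/-- The `Γ₁`-region of a point `x`: the set of points `z` of the triangle such that
`x ∈ N_PE^r(z, M)`, where `v` is the vertex-region assignment.  Explicitly, for `z` in the
vertex region of `b i` the condition is `d(yᵢ, ℓ(yᵢ,x)) ≤ r · d(yᵢ, ℓ(yᵢ,z))`, i.e. in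
barycentric coordinates `1 − b.coord i x ≤ r·(1 − b.coord i z)`. -/
noncomputable def Gamma1 (b : AffineBasis (Fin 3) ℝ (EuclideanSpace ℝ (Fin 2)))
    (v : EuclideanSpace ℝ (Fin 2) → Fin 3) (r : ℝ)
    (x : EuclideanSpace ℝ (Fin 2)) : Set (EuclideanSpace ℝ (Fin 2)) :=
  {z | z ∈ Tri b ∧ 1 - b.coord (v z) x ≤ r * (1 - b.coord (v z) z)}

open Metric

open scoped RealInnerProductSpace

section AffineFunctional

variable {E : Type*} [NormedAddCommGroup E] [InnerProductSpace ℝ E]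

theorem infDist_setOf_eq_zero_eq_abs_div_norm (f : E →ᵃ[ℝ] ℝ) {u : E} (hu : u ≠ 0)
    (hfu : ∀ z, f.linear z = ⟪u, z⟫) (x : E) :
    infDist x {z | f z = 0} = |f x| / ‖u‖ := by
  have hu' : 0 < ‖u‖ := norm_pos_iff.mpr hu
  have hf_sub : ∀ y, f x - f y = ⟪u, x - y⟫ := fun y => by
    rw [← hfu, ← vsub_eq_sub, ← f.linearMap_vsub, vsub_eq_sub]
  -- the foot of the perpendicular from `x` to the hyperplane
  set y₀ := x - (f x / ‖u‖ ^ 2) • u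
  have hy₀ : f y₀ = 0 := by
    have h := hf_sub y₀
    rw [sub_sub_cancel, inner_smul_right, real_inner_self_eq_norm_sq,
      div_mul_cancel₀ _ (by positivity)] at h
    linarith
  refine le_antisymm ?_ ((le_infDist ⟨y₀, hy₀⟩).2 fun y (hy : f y = 0) => ?_)
  · calc infDist x {z | f z = 0} ≤ dist x y₀ := infDist_le_dist_of_mem hy₀
      _ = |f x| / ‖u‖ := by
        rw [dist_eq_norm, sub_sub_cancel, norm_smul, Real.norm_eq_abs, abs_div,
          abs_of_nonneg (sq_nonneg ‖u‖)]
        field_simp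
  · rw [div_le_iff₀ hu', dist_eq_norm, mul_comm]
    calc |f x| = |⟪u, x - y⟫| := by rw [← hf_sub, hy, sub_zero]
      _ ≤ ‖u‖ * ‖x - y‖ := abs_real_inner_le_norm u (x - y)

theorem infDist_setOf_eq_zero_le_iff [FiniteDimensional ℝ E] (f : E →ᵃ[ℝ] ℝ)
    (hf : f.linear ≠ 0) (x y : E) :
    infDist x {z | f z = 0} ≤ infDist y {z | f z = 0} ↔ |f x| ≤ |f y| := by
  set u := (InnerProductSpace.toDual ℝ E).symm (LinearMap.toContinuousLinearMap f.linear)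
  have hfu : ∀ z, f.linear z = ⟪u, z⟫ := fun z => by
    simp [u, InnerProductSpace.toDual_symm_apply]
  have hu : u ≠ 0 := fun h => hf <| LinearMap.ext fun z => by simp [hfu, h]
  simp only [infDist_setOf_eq_zero_eq_abs_div_norm f hu hfu]
  exact div_le_div_iff_of_pos_right (norm_pos_iff.mpr hu)

end AffineFunctional

namespace AffineBasis

theorem coord_linear_ne_zero_s11 {ι k V P : Type*} [Nontrivial ι] [Ring k] [Nontrivial k]
    [AddCommGroup V] [Module k V] [AddTorsor V P] (b : AffineBasis ι k P) (i : ι) : (b.coord i).linear ≠ 0 := by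
  intro h
  obtain ⟨p, hp⟩ := b.surjective_coord i 0
  obtain ⟨q, hq⟩ := b.surjective_coord i 1
  have := (b.coord i).linearMap_vsub q p
  rw [h, hp, hq, LinearMap.zero_apply, vsub_eq_sub, sub_zero] at this
  exact zero_ne_one this

variable {ι E : Type*} [Nontrivial ι] [NormedAddCommGroup E] [InnerProductSpace ℝ E]
  [FiniteDimensional ℝ E]

theorem infDist_setOf_coord_eq_zero_le_iff (b : AffineBasis ι ℝ E) (i : ι) {x y : E}
    (hx : x ∈ convexHull ℝ (range b)) (hy : y ∈ convexHull ℝ (range b)) :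
    infDist x {z | b.coord i z = 0} ≤ infDist y {z | b.coord i z = 0} ↔
      b.coord i x ≤ b.coord i y := by
  rw [b.convexHull_eq_nonneg_coord] at hx hy
  rw [infDist_setOf_eq_zero_le_iff _ (b.coord_linear_ne_zero_s11 i), abs_of_nonneg (hx i),
    abs_of_nonneg (hy i)]

end AffineBasis

theorem mem_Gamma1_of_coord_le {b : AffineBasis (Fin 3) ℝ (EuclideanSpace ℝ (Fin 2))}
    {v : EuclideanSpace ℝ (Fin 2) → Fin 3} {r : ℝ} {x y z : EuclideanSpace ℝ (Fin 2)}
    (hz : z ∈ Gamma1 b v r x) (hxy : b.coord (v z) x ≤ b.coord (v z) y) :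
    z ∈ Gamma1 b v r y :=
  ⟨hz.1, by linarith [hz.2]⟩

theorem Gamma1_sample_eq_inter_edge_extrema_general
    (b : AffineBasis (Fin 3) ℝ (EuclideanSpace ℝ (Fin 2)))
    (v : EuclideanSpace ℝ (Fin 2) → Fin 3)
    (r : ℝ)
    (n : ℕ) (X : Fin n → EuclideanSpace ℝ (Fin 2)) (hX : ∀ j, X j ∈ Tri b)
    (sel : Fin 3 → Fin n)
    (hsel : ∀ i j, Metric.infDist (X (sel i)) {z | b.coord i z = 0} ≤
      Metric.infDist (X j) {z | b.coord i z = 0}) :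
    (⋂ j, Gamma1 b v r (X j)) = ⋂ i, Gamma1 b v r (X (sel i)) := by
  have hcoord : ∀ i j, b.coord i (X (sel i)) ≤ b.coord i (X j) := fun i j =>
    (b.infDist_setOf_coord_eq_zero_le_iff i (hX (sel i)) (hX j)).1 (hsel i j)
  refine (subset_iInter fun i => iInter_subset _ (sel i)).antisymm ?_
  exact subset_iInter fun j z hz =>
    mem_Gamma1_of_coord_le (mem_iInter.1 hz (v z)) (hcoord (v z) j)

/-- Let `X₁,…,Xₙ` be points of the triangle and for each edge `eᵢ` (the zero set of the
`i`-th barycentric coordinate) let `sel i` pick a sample point closest to that edge.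
Then the `Γ₁`-region of the whole sample equals the intersection of the `Γ₁`-regions of
the three edge extrema: `Γ₁^r(Xₙ, M) = ⋂_{i=1}^{3} Γ₁^r(X_{eᵢ}, M)`. -/
theorem Gamma1_sample_eq_inter_edge_extrema
    (b : AffineBasis (Fin 3) ℝ (EuclideanSpace ℝ (Fin 2)))
    (v : EuclideanSpace ℝ (Fin 2) → Fin 3)
    (r : ℝ) (hr : 1 ≤ r)
    (n : ℕ) (X : Fin n → EuclideanSpace ℝ (Fin 2)) (hX : ∀ j, X j ∈ Tri b)
    (sel : Fin 3 → Fin n)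
    (hsel : ∀ i j, Metric.infDist (X (sel i)) {z | b.coord i z = 0} ≤
      Metric.infDist (X j) {z | b.coord i z = 0}) :
    (⋂ j, Gamma1 b v r (X j)) = ⋂ i, Gamma1 b v r (X (sel i)) :=
  Gamma1_sample_eq_inter_edge_extrema_general b v r n X hX sel hsel
end
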